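/- Let 𝒫 be a d×2d real matrix satisfying the maximal isotropy condition 𝒫 η 𝒫^T = 0, where η = ((0,1_d),(1_d,0)). If f = f̃ ∘ 𝒫 and g = g̃ ∘ 𝒫 for differentiable functions f̃, g̃ : ℝ^d → ℝ (with 𝒫 : ℝ^{2d} → ℝ^d the induced linear map), then η^{IJ} ∂_I f ∂_J g = 0 at every point of ℝ^{2d}; i.e. functions pulled back along a maximally isotropic polarization automatically satisfy the strong constraint of DFT. -/

import Mathlib

open scoped BigOperators

noncomputable section

/-- Doubled index set: `I = 1,…,2d`, realized as `Fin d ⊕ Fin d`. -/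
abbrev DIdx (d : ℕ) := Fin d ⊕ Fin d

/-- The doubled space `ℝ^{2d}`. -/
abbrev DSpace (d : ℕ) := DIdx d → ℝ

/-- The constant O(d,d)-invariant metric `η = ((0,1_d),(1_d,0))`; numerically `η⁻¹ = η`. -/
def eta {d : ℕ} : DIdx d → DIdx d → ℝ
  | Sum.inl i, Sum.inr j => if i = j then 1 else 0
  | Sum.inr i, Sum.inl j => if i = j then 1 else 0
  | _, _ => 0

/-- Partial derivative `∂_I f (x)`. -/
def pd {d : ℕ} (f : DSpace d → ℝ) (I : DIdx d) (x : DSpace d) : ℝ :=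
  fderiv ℝ f x (Pi.single I 1)

/-- Lowered components `A_I := η_{IJ} A^J`. -/
def low {d : ℕ} (A : DSpace d → DSpace d) (I : DIdx d) : DSpace d → ℝ :=
  fun x => ∑ J, eta I J * A x J

/-- Raised derivative `∂^I f := η^{IJ} ∂_J f`. -/
def pdU {d : ℕ} (f : DSpace d → ℝ) (I : DIdx d) (x : DSpace d) : ℝ :=
  ∑ J, eta I J * pd f J x

/-- The split-signature metric `η` as a matrix. -/
def etaM (d : ℕ) : Matrix (DIdx d) (DIdx d) ℝ := Matrix.of fun I J => eta I J

/-!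
By the chain rule, `∂_I (f̃ ∘ 𝒫)(x) = ∑ₐ ∂ₐ f̃(𝒫 x) 𝒫_{aI}`, i.e. the gradient of `f` is `𝒫ᵀ ∇f̃`.
Hence `η^{IJ} ∂_I f ∂_J g = ∇f̃ · (𝒫 η 𝒫ᵀ) ∇g̃`, which vanishes by maximal isotropy.
-/

open Matrix

theorem fderiv_comp_mulVec_apply_single {𝕜 : Type*} [NontriviallyNormedField 𝕜]
    {ι κ : Type*} [Fintype ι] [DecidableEq ι] [Fintype κ] [DecidableEq κ]
    (A : Matrix κ ι 𝕜) {f : (κ → 𝕜) → 𝕜} {x : ι → 𝕜}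
    (hf : DifferentiableAt 𝕜 f (A *ᵥ x)) (i : ι) :
    fderiv 𝕜 (fun y => f (A *ᵥ y)) x (Pi.single i 1) =
      ((fun k => fderiv 𝕜 f (A *ᵥ x) (Pi.single k 1)) ᵥ* A) i := by
  let L : (ι → 𝕜) →L[𝕜] (κ → 𝕜) := ⟨A.mulVecLin, A.mulVecLin.continuous_on_pi⟩
  have hchain : fderiv 𝕜 (fun y => f (A *ᵥ y)) x = (fderiv 𝕜 f (A *ᵥ x)).comp L :=
    (hf.hasFDerivAt.comp x L.hasFDerivAt).fderiv
  rw [hchain, ContinuousLinearMap.comp_apply]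
  conv_lhs => rw [pi_eq_sum_univ' (L (Pi.single i 1))]
  simp [L, vecMul, dotProduct, mul_comm]

theorem sum_sum_mul_mul_eq_dotProduct_mulVec {ι : Type*} [Fintype ι] {R : Type*} [CommSemiring R]
    (M : Matrix ι ι R) (u v : ι → R) :
    ∑ i, ∑ j, M i j * u i * v j = u ⬝ᵥ (M *ᵥ v) := by
  simp only [dotProduct, mulVec, Finset.mul_sum]
  exact Finset.sum_congr rfl fun i _ => Finset.sum_congr rfl fun j _ => by ring

theorem vecMul_dotProduct_mulVec_vecMul {ι κ : Type*} [Fintype ι] [Fintype κ] {R : Type*}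
    [CommSemiring R] (P : Matrix κ ι R) (M : Matrix ι ι R) (u v : κ → R) :
    u ᵥ* P ⬝ᵥ (M *ᵥ (v ᵥ* P)) = u ⬝ᵥ ((P * M * Pᵀ) *ᵥ v) := by
  rw [← mulVec_transpose P v, ← dotProduct_mulVec, mulVec_mulVec, mulVec_mulVec,
    Matrix.mul_assoc]

theorem statement12 {d : ℕ} (P : Matrix (Fin d) (DIdx d) ℝ)
    (hP : P * etaM d * P.transpose = 0)
    (ft gt : (Fin d → ℝ) → ℝ)
    (hft : Differentiable ℝ ft) (hgt : Differentiable ℝ gt)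
    (x : DSpace d) :
    ∑ I, ∑ J, eta I J * pd (fun y => ft (P.mulVec y)) I x
        * pd (fun y => gt (P.mulVec y)) J x = 0 := by
  simp only [pd, fderiv_comp_mulVec_apply_single P (hft _),
    fderiv_comp_mulVec_apply_single P (hgt _)]
  refine (sum_sum_mul_mul_eq_dotProduct_mulVec (etaM d) _ _).trans ?_
  rw [vecMul_dotProduct_mulVec_vecMul, hP, zero_mulVec, dotProduct_zero]
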